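/- arXiv:2109.15226 — 3 statements merged into one kernel-verified Lean document; each statement's English description precedes it below -/
import Mathlib

section
/- Let c̄, x̄, r̄ ∈ ℤ and f ∈ ℕ, and define fixed-point multiplication of c̃ = c̄·2^{-f} with ỹ = ȳ·2^{-f} as ⌊c̄·ȳ·2^{-f}⌋·2^{-f} (ignoring the modulo reduction). Then |⌊c̄(x̄+r̄)2^{-f}⌋·2^{-f} − ⌊c̄·r̄·2^{-f}⌋·2^{-f} − c̄·x̄·2^{-2f}| ≤ 2·2^{-f}, i.e., c̃·x̃ can be recovered from c̃·(x̃+r̃) and c̃·r̃ up to an error of order 2^{-f}. -/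
theorem fixed_point_retrieval (c x r : ℤ) (f : ℕ) :
    |(⌊((c * (x + r) : ℤ) : ℝ) * (2 : ℝ) ^ (-(f : ℤ))⌋ : ℝ) * (2 : ℝ) ^ (-(f : ℤ)) -
      (⌊((c * r : ℤ) : ℝ) * (2 : ℝ) ^ (-(f : ℤ))⌋ : ℝ) * (2 : ℝ) ^ (-(f : ℤ)) -
      ((c * x : ℤ) : ℝ) * (2 : ℝ) ^ (-(2 * f : ℤ))| ≤ 2 * (2 : ℝ) ^ (-(f : ℤ)) := by
  set e : ℝ := (2 : ℝ) ^ (-(f : ℤ)) with he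
  have hepos : 0 < e := by positivity
  have h2f : (2 : ℝ) ^ (-(2 * f : ℤ)) = e * e := by
    rw [he, ← zpow_add₀ (by norm_num : (2:ℝ) ≠ 0)]
    ring_nf
  set A : ℝ := ((c * (x + r) : ℤ) : ℝ) * e with hA
  set B : ℝ := ((c * r : ℤ) : ℝ) * e with hB
  have hAB : ((c * x : ℤ) : ℝ) * (e * e) = (A - B) * e := by
    rw [hA, hB]; push_cast; ring
  rw [h2f, hAB]
  have h1 := Int.floor_le A
  have h2 := Int.lt_floor_add_one A
  have h3 := Int.floor_le B
  have h4 := Int.lt_floor_add_one B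
  rw [abs_le]
  constructor <;> nlinarith [mul_pos hepos hepos]
end

section
/- Let B be a D×D matrix whose row i has support equal to the cyclic window {i, i+1, …, i+α−1} (indices mod D), with α ≤ D. Then for any set 𝒜 ⊆ [D] of size D−α+1, every index j ∈ [D] lies in the support of row i of B for some i ∈ 𝒜, i.e., the union of the supports of the rows indexed by 𝒜 covers [D]. -/
theorem cyclic_support_covering (D α : ℕ) (hα : 0 < α) (hαD : α ≤ D)
    (B : Matrix (Fin D) (Fin D) ℝ)
    (hsupp : ∀ i j : Fin D, B i j ≠ 0 ↔ ∃ t : ℕ, t < α ∧ (j : ℕ) = ((i : ℕ) + t) % D)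
    (𝒜 : Finset (Fin D)) (hcard : 𝒜.card = D - α + 1) :
    ∀ j : Fin D, ∃ i ∈ 𝒜, B i j ≠ 0 := by
  intro j
  have hD : 0 < D := lt_of_lt_of_le hα hαD
  set f : Fin α → Fin D := fun t =>
    ⟨((j : ℕ) + D - (t : ℕ)) % D, Nat.mod_lt _ hD⟩ with hf
  have hinj : Function.Injective f := by
    intro t1 t2 h
    have h1 : (t1 : ℕ) < D := lt_of_lt_of_le t1.2 hαD
    have h2 : (t2 : ℕ) < D := lt_of_lt_of_le t2.2 hαD
    have hv : ((j : ℕ) + D - (t1 : ℕ)) % D = ((j : ℕ) + D - (t2 : ℕ)) % D :=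
      congrArg Fin.val h
    have hm : Nat.ModEq D ((j : ℕ) + D - (t1 : ℕ)) ((j : ℕ) + D - (t2 : ℕ)) := hv
    have hm2 := hm.add_right ((t1 : ℕ) + (t2 : ℕ))
    rw [show (j : ℕ) + D - (t1 : ℕ) + ((t1 : ℕ) + (t2 : ℕ)) = (j : ℕ) + D + (t2 : ℕ) by omega,
        show (j : ℕ) + D - (t2 : ℕ) + ((t1 : ℕ) + (t2 : ℕ)) = (j : ℕ) + D + (t1 : ℕ) by omega]
      at hm2
    have hm3 : Nat.ModEq D (t2 : ℕ) (t1 : ℕ) := Nat.ModEq.add_left_cancel' _ hm2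
    have hval : (t2 : ℕ) = (t1 : ℕ) := by
      have := hm3
      unfold Nat.ModEq at this
      rwa [Nat.mod_eq_of_lt h2, Nat.mod_eq_of_lt h1] at this
    exact (Fin.val_injective hval).symm
  have hScard : (Finset.image f Finset.univ).card = α := by
    rw [Finset.card_image_of_injective _ hinj, Finset.card_univ, Fintype.card_fin]
  by_contra hcon
  push_neg at hcon
  have hdisj : Disjoint 𝒜 (Finset.image f Finset.univ) := by
    rw [Finset.disjoint_right]
    intro i hiS hiA
    obtain ⟨t, _, rfl⟩ := Finset.mem_image.mp hiS
    have hBz := hcon _ hiA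
    have : B (f t) j ≠ 0 := by
      rw [hsupp]
      refine ⟨(t : ℕ), t.2, ?_⟩
      have ht : (t : ℕ) ≤ (j : ℕ) + D := le_of_lt (lt_of_lt_of_le (lt_of_lt_of_le t.2 hαD) (Nat.le_add_left _ _))
      show (j : ℕ) = (((j : ℕ) + D - (t : ℕ)) % D + (t : ℕ)) % D
      rw [Nat.mod_add_mod, show (j : ℕ) + D - (t : ℕ) + (t : ℕ) = (j : ℕ) + D by omega,
        Nat.add_mod_right, Nat.mod_eq_of_lt j.2]
    exact this hBz
  have hu := Finset.card_union_of_disjoint hdisj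
  have hle := Finset.card_le_univ (𝒜 ∪ Finset.image f Finset.univ)
  rw [hu, hcard, hScard, Fintype.card_fin] at hle
  omega
end

section
/- The coded FL update rule Θ^{(e+1)} = Θ^{(e)} − μ((1/m)Σ_{i∈𝒜} a_{s,i} P_i^{(e)} + λΘ^{(e)}), computed from any D−α+1 devices' responses, equals the full gradient descent update Θ^{(e+1)} = Θ^{(e)} − μ∇f(Θ^{(e)}) on the regularized least-squares loss f(Θ) = (1/(2m))‖XΘ−Y‖_F² + (λ/2)‖Θ‖_F². -/
open Matrix

theorem coded_fl_update_rule (S D d c α : ℕ) (n : Fin D → ℕ)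
    (m : ℕ) (hm : m = ∑ i : Fin D, n i) (hm0 : 0 < m)
    (lam μ : ℝ) (hμ : 0 < μ)
    (X : Matrix ((i : Fin D) × Fin (n i)) (Fin d) ℝ)
    (Y : Matrix ((i : Fin D) × Fin (n i)) (Fin c) ℝ)
    (Xloc : (i : Fin D) → Matrix (Fin (n i)) (Fin d) ℝ)
    (Yloc : (i : Fin D) → Matrix (Fin (n i)) (Fin c) ℝ)
    (hX : ∀ (i : Fin D) (j : Fin (n i)) (l : Fin d), Xloc i j l = X ⟨i, j⟩ l)
    (hY : ∀ (i : Fin D) (j : Fin (n i)) (l : Fin c), Yloc i j l = Y ⟨i, j⟩ l)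
    (Θ : Matrix (Fin d) (Fin c) ℝ)
    (G : Fin D → Matrix (Fin d) (Fin c) ℝ)
    (hG : ∀ i, G i = (Xloc i)ᵀ * Xloc i * Θ - (Xloc i)ᵀ * Yloc i)
    (A : Matrix (Fin S) (Fin D) ℝ) (B : Matrix (Fin D) (Fin D) ℝ)
    (hAB : A * B = Matrix.of fun _ _ => (1 : ℝ))
    (P : Fin D → Matrix (Fin d) (Fin c) ℝ)
    (hP : ∀ i, P i = ∑ j : Fin D, B i j • G j)
    (s : Fin S) (𝒜 : Finset (Fin D))
    (hsupp : ∀ i : Fin D, A s i ≠ 0 ↔ i ∈ 𝒜)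
    (hcard : 𝒜.card = D - α + 1) :
    Θ - μ • ((1 / (m : ℝ)) • (∑ i ∈ 𝒜, A s i • P i) + lam • Θ) =
    Θ - μ • ((1 / (m : ℝ)) • (Xᵀ * (X * Θ - Y)) + lam • Θ) := by
  have h1 : (∑ i ∈ 𝒜, A s i • P i) = ∑ i : Fin D, A s i • P i := by
    apply Finset.sum_subset (Finset.subset_univ _)
    intro i _ hi
    have : A s i = 0 := by
      by_contra h
      exact hi ((hsupp i).mp h)
    simp [this]
  have h2 : (∑ i : Fin D, A s i • P i) = ∑ j : Fin D, G j := by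
    simp only [hP, Finset.smul_sum, smul_smul]
    rw [Finset.sum_comm]
    refine Finset.sum_congr rfl fun j _ => ?_
    rw [← Finset.sum_smul]
    have : ∑ i : Fin D, A s i * B i j = 1 := by
      have := congrFun (congrFun hAB s) j
      simpa [Matrix.mul_apply] using this
    rw [this, one_smul]
  have h3 : (∑ j : Fin D, G j) = Xᵀ * (X * Θ - Y) := by
    ext k l
    rw [Matrix.sum_apply, Matrix.mul_apply, ← Finset.univ_sigma_univ, Finset.sum_sigma]
    refine Finset.sum_congr rfl fun i _ => ?_
    rw [hG]
    simp only [Matrix.sub_apply, Matrix.mul_apply, Matrix.transpose_apply, hX, hY,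
      Matrix.sub_apply, mul_sub, Finset.sum_sub_distrib, Finset.mul_sum, Finset.sum_mul]
    congr 1
    rw [Finset.sum_comm]
    refine Finset.sum_congr rfl fun j _ => Finset.sum_congr rfl fun v _ => ?_
    ring
  rw [h1, h2, h3]
end
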